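/- Let f_L, f_R : ℝ → ℝ be twice continuously differentiable with f_L'' Lipschitz with constant M_L and f_R'' Lipschitz with constant M_R. Let l3 < l2 < l1 < m < r1 < r2 < r3 be reals, let α > max(M_L, M_R)/2, and let h = max(r3 − l1, r1 − l3). If moreover f_R(l1) ≤ f_L(l1) and f_L(r1) ≤ f_R(r1), then there exists x ∈ (l1, r1) with q^L(x) = q^R(x). -/

import Mathlib

set_option maxHeartbeats 800000


/-- First divided difference. -/
noncomputable def dd2 (φ : ℝ → ℝ) (a b : ℝ) : ℝ := (φ a - φ b) / (a - b)

/-- Second divided difference. -/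
noncomputable def dd3 (φ : ℝ → ℝ) (a b c : ℝ) : ℝ := (dd2 φ a b - dd2 φ a c) / (b - c)

/-- The left model quadratic. -/
noncomputable def qL (fL : ℝ → ℝ) (l1 l2 l3 α h x : ℝ) : ℝ :=
  fL l1 + dd2 fL l1 l2 * (x - l1) + (dd3 fL l1 l2 l3 - α * h) * (x - l1) * (x - l2)

/-- The right model quadratic. -/
noncomputable def qR (fR : ℝ → ℝ) (r1 r2 r3 α h x : ℝ) : ℝ :=
  fR r1 + dd2 fR r1 r2 * (x - r1) + (dd3 fR r1 r2 r3 - α * h) * (x - r1) * (x - r2)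

lemma dd3_mvt (f : ℝ → ℝ) (hf : ContDiff ℝ 2 f) (a b c : ℝ) (hab : a < b) (hbc : b < c) :
    ∃ ξ ∈ Set.Ioo a c, dd3 f a b c = deriv (deriv f) ξ / 2 := by
  have hab' : a ≠ b := ne_of_lt hab
  have hac' : a ≠ c := ne_of_lt (hab.trans hbc)
  have hbc' : b ≠ c := ne_of_lt hbc
  have hdf : Differentiable ℝ f := hf.differentiable (by norm_num)
  have hf' : ContDiff ℝ 1 (deriv f) := by
    have := (contDiff_succ_iff_deriv (n := 1)).mp (by exact_mod_cast hf)
    exact this.2.2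
  have hdf' : Differentiable ℝ (deriv f) := hf'.differentiable (by norm_num)
  set K := dd3 f a b c with hK
  set g : ℝ → ℝ := fun x => f x - (f a + dd2 f a b * (x - a) + K * (x - a) * (x - b)) with hg
  have hga : g a = 0 := by simp [hg]
  have hgb : g b = 0 := by
    have h1 : a - b ≠ 0 := sub_ne_zero.mpr hab'
    simp only [hg, dd2]
    field_simp
    ring
  have hgc : g c = 0 := by
    have h1 : a - b ≠ 0 := sub_ne_zero.mpr hab'
    have h2 : a - c ≠ 0 := sub_ne_zero.mpr hac'
    have h3 : b - c ≠ 0 := sub_ne_zero.mpr hbc'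
    simp only [hg, hK, dd3, dd2]
    field_simp
    ring
  have hgd : ∀ x, HasDerivAt g (deriv f x - (dd2 f a b + K * ((x - a) + (x - b)))) x := by
    intro x
    have h1 : HasDerivAt (fun x : ℝ => x - a) 1 x := (hasDerivAt_id x).sub_const a
    have h2 : HasDerivAt (fun x : ℝ => x - b) 1 x := (hasDerivAt_id x).sub_const b
    have h3 : HasDerivAt (fun x => f a + dd2 f a b * (x - a) + K * (x - a) * (x - b))
        (dd2 f a b * 1 + (K * ((x - a) * 1 + 1 * (x - b)))) x := by
      exact ((h1.const_mul (dd2 f a b)).const_add (f a)).add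
        (((h1.const_mul K).mul h2).congr_deriv (by ring))
    have : HasDerivAt g (deriv f x - (dd2 f a b * 1 + (K * ((x - a) * 1 + 1 * (x - b))))) x :=
      (hdf x).hasDerivAt.sub h3
    convert this using 1
    ring
  have hgderiv : ∀ x, deriv g x = deriv f x - (dd2 f a b + K * ((x - a) + (x - b))) :=
    fun x => (hgd x).deriv
  have hgcont : Continuous g := by
    apply hdf.continuous.sub
    continuity
  obtain ⟨ξ1, hξ1, hdξ1⟩ := exists_deriv_eq_zero hab (hgcont.continuousOn) (hga.trans hgb.symm)
  obtain ⟨ξ2, hξ2, hdξ2⟩ := exists_deriv_eq_zero hbc (hgcont.continuousOn) (hgb.trans hgc.symm)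
  have hcontdg : Continuous (deriv g) := by
    have : Continuous (fun x => deriv f x - (dd2 f a b + K * ((x - a) + (x - b)))) := by
      apply hdf'.continuous.sub; continuity
    rwa [show deriv g = fun x => deriv f x - (dd2 f a b + K * ((x - a) + (x - b))) from funext hgderiv]
  have hξ12 : ξ1 < ξ2 := hξ1.2.trans hξ2.1
  obtain ⟨ξ, hξ, hdξ⟩ := exists_deriv_eq_zero hξ12 (hcontdg.continuousOn) (hdξ1.trans hdξ2.symm)
  refine ⟨ξ, ⟨hξ1.1.trans hξ.1, hξ.2.trans hξ2.2⟩, ?_⟩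
  have hdd : HasDerivAt (deriv g) (deriv (deriv f) ξ - K * 2) ξ := by
    have h1 : HasDerivAt (fun x : ℝ => x - a) 1 ξ := (hasDerivAt_id ξ).sub_const a
    have h2 : HasDerivAt (fun x : ℝ => x - b) 1 ξ := (hasDerivAt_id ξ).sub_const b
    have h3 : HasDerivAt (fun x => dd2 f a b + K * ((x - a) + (x - b))) (K * 2) ξ := by
      exact (((h1.add h2).const_mul K).const_add (dd2 f a b)).congr_deriv (by ring)
    have h4 := ((hdf' ξ).hasDerivAt.sub h3)
    exact h4.congr_of_eventuallyEq (Filter.Eventually.of_forall fun x => hgderiv x)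
  have := hdd.deriv
  rw [hdξ] at this
  linarith [this]


lemma dd3_rot (f : ℝ → ℝ) (a b c : ℝ) (hab : a ≠ b) (hac : a ≠ c) (hbc : b ≠ c) :
    dd3 f a b c = dd3 f c a b := by
  have h1 : a - b ≠ 0 := sub_ne_zero.mpr hab
  have h2 : a - c ≠ 0 := sub_ne_zero.mpr hac
  have h3 : b - c ≠ 0 := sub_ne_zero.mpr hbc
  have h4 : b - a ≠ 0 := sub_ne_zero.mpr hab.symm
  have h5 : c - a ≠ 0 := sub_ne_zero.mpr hac.symm
  have h6 : c - b ≠ 0 := sub_ne_zero.mpr hbc.symm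
  simp only [dd3, dd2]
  field_simp
  ring

lemma dd3_rev (f : ℝ → ℝ) (a b c : ℝ) (hab : a ≠ b) (hac : a ≠ c) (hbc : b ≠ c) :
    dd3 f a b c = dd3 f c b a := by
  have h1 : a - b ≠ 0 := sub_ne_zero.mpr hab
  have h2 : a - c ≠ 0 := sub_ne_zero.mpr hac
  have h3 : b - c ≠ 0 := sub_ne_zero.mpr hbc
  have h4 : b - a ≠ 0 := sub_ne_zero.mpr hab.symm
  have h5 : c - a ≠ 0 := sub_ne_zero.mpr hac.symm
  have h6 : c - b ≠ 0 := sub_ne_zero.mpr hbc.symm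
  simp only [dd3, dd2]
  field_simp
  ring

lemma dd3_swap (f : ℝ → ℝ) (a b c : ℝ) (hab : a ≠ b) (hac : a ≠ c) (hbc : b ≠ c) :
    dd3 f a b c = dd3 f b a c := by
  have h1 : a - b ≠ 0 := sub_ne_zero.mpr hab
  have h2 : a - c ≠ 0 := sub_ne_zero.mpr hac
  have h3 : b - c ≠ 0 := sub_ne_zero.mpr hbc
  have h4 : b - a ≠ 0 := sub_ne_zero.mpr hab.symm
  have h5 : c - a ≠ 0 := sub_ne_zero.mpr hac.symm
  have h6 : c - b ≠ 0 := sub_ne_zero.mpr hbc.symm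
  simp only [dd3, dd2]
  field_simp
  ring

lemma newton_id (f : ℝ → ℝ) (a b x : ℝ) (hab : a ≠ b) (hax : a ≠ x) (hbx : b ≠ x) :
    f x = f a + dd2 f a b * (x - a) + dd3 f a b x * (x - a) * (x - b) := by
  have h1 : a - b ≠ 0 := sub_ne_zero.mpr hab
  have h2 : a - x ≠ 0 := sub_ne_zero.mpr hax
  have h3 : b - x ≠ 0 := sub_ne_zero.mpr hbx
  have h4 : b - a ≠ 0 := sub_ne_zero.mpr hab.symm
  have h5 : x - a ≠ 0 := sub_ne_zero.mpr hax.symm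
  have h6 : x - b ≠ 0 := sub_ne_zero.mpr hbx.symm
  simp only [dd3, dd2]
  field_simp
  ring

theorem stmt3 (fL fR : ℝ → ℝ) (ML MR : ℝ)
    (hfL : ContDiff ℝ 2 fL) (hfR : ContDiff ℝ 2 fR)
    (hLipL : ∀ x y : ℝ, |deriv (deriv fL) x - deriv (deriv fL) y| ≤ ML * |x - y|)
    (hLipR : ∀ x y : ℝ, |deriv (deriv fR) x - deriv (deriv fR) y| ≤ MR * |x - y|)
    (l3 l2 l1 m r1 r2 r3 : ℝ)
    (h1 : l3 < l2) (h2 : l2 < l1) (h3 : l1 < m) (h4 : m < r1) (h5 : r1 < r2) (h6 : r2 < r3)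
    (α : ℝ) (hα : α > max ML MR / 2) (h : ℝ) (hh : h = max (r3 - l1) (r1 - l3))
    (hcrossL : fR l1 ≤ fL l1) (hcrossR : fL r1 ≤ fR r1) :
    ∃ x ∈ Set.Ioo l1 r1, qL fL l1 l2 l3 α h x = qR fR r1 r2 r3 α h x := by
  have hlr : l1 < r1 := h3.trans h4
  have hML0 : 0 ≤ ML := by
    have hb := hLipL 0 1
    have hn := abs_nonneg (deriv (deriv fL) 0 - deriv (deriv fL) 1)
    norm_num at hb
    linarith
  have hMR0 : 0 ≤ MR := by
    have hb := hLipR 0 1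
    have hn := abs_nonneg (deriv (deriv fR) 0 - deriv (deriv fR) 1)
    norm_num at hb
    linarith
  have hhR : r3 - l1 ≤ h := by rw [hh]; exact le_max_left _ _
  have hhL : r1 - l3 ≤ h := by rw [hh]; exact le_max_right _ _
  have hh0 : 0 < h := by linarith
  have hαL : ML / 2 < α := by
    have := le_max_left ML MR; linarith
  have hαR : MR / 2 < α := by
    have := le_max_right ML MR; linarith
  -- Right side estimate: qR at l1 lies strictly below fR l1
  obtain ⟨ξ1, hξ1, he1⟩ := dd3_mvt fR hfR r1 r2 r3 h5 h6
  obtain ⟨ξ2, hξ2, he2⟩ := dd3_mvt fR hfR l1 r1 r2 hlr h5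
  have hperm : dd3 fR r1 r2 l1 = dd3 fR l1 r1 r2 :=
    dd3_rot fR r1 r2 l1 (ne_of_lt h5) (ne_of_gt hlr) (ne_of_gt (hlr.trans h5))
  have keyR : dd3 fR r1 r2 r3 - dd3 fR r1 r2 l1 < α * h := by
    rw [he1, hperm, he2]
    have hb := hLipR ξ1 ξ2
    have habs : |ξ1 - ξ2| ≤ r3 - l1 := by
      rw [abs_le]
      constructor
      · linarith [hξ1.1, hξ1.2, hξ2.1, hξ2.2]
      · linarith [hξ1.1, hξ1.2, hξ2.1, hξ2.2]
    have hd1 : deriv (deriv fR) ξ1 - deriv (deriv fR) ξ2 ≤ MR * (r3 - l1) :=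
      le_trans (le_abs_self _) (le_trans hb (mul_le_mul_of_nonneg_left habs hMR0))
    linarith [mul_le_mul_of_nonneg_left hhR hMR0, mul_lt_mul_of_pos_right hαR hh0]
  have hqRl1 : qR fR r1 r2 r3 α h l1 < fR l1 := by
    have hne := newton_id fR r1 r2 l1 (ne_of_lt h5) (ne_of_gt hlr) (ne_of_gt (hlr.trans h5))
    have hpos : 0 < (l1 - r1) * (l1 - r2) := by nlinarith
    have heq : qR fR r1 r2 r3 α h l1 =
        fR l1 + (dd3 fR r1 r2 r3 - dd3 fR r1 r2 l1 - α * h) * ((l1 - r1) * (l1 - r2)) := by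
      simp only [qR]
      rw [hne]
      ring
    rw [heq]
    linarith [mul_neg_of_neg_of_pos (show dd3 fR r1 r2 r3 - dd3 fR r1 r2 l1 - α * h < 0 by
      linarith) hpos]
  -- Left side estimate: qL at r1 lies strictly below fL r1
  obtain ⟨η1, hη1, hf1⟩ := dd3_mvt fL hfL l3 l2 l1 h1 h2
  obtain ⟨η2, hη2, hf2⟩ := dd3_mvt fL hfL l2 l1 r1 h2 hlr
  have hpermL1 : dd3 fL l1 l2 l3 = dd3 fL l3 l2 l1 :=
    dd3_rev fL l1 l2 l3 (ne_of_gt h2) (ne_of_gt (h1.trans h2)) (ne_of_gt h1)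
  have hpermL2 : dd3 fL l1 l2 r1 = dd3 fL l2 l1 r1 :=
    dd3_swap fL l1 l2 r1 (ne_of_gt h2) (ne_of_lt hlr) (ne_of_lt (h2.trans hlr))
  have keyL : dd3 fL l1 l2 l3 - dd3 fL l1 l2 r1 < α * h := by
    rw [hpermL1, hpermL2, hf1, hf2]
    have hb := hLipL η1 η2
    have habs : |η1 - η2| ≤ r1 - l3 := by
      rw [abs_le]
      constructor
      · linarith [hη1.1, hη1.2, hη2.1, hη2.2]
      · linarith [hη1.1, hη1.2, hη2.1, hη2.2]
    have hd1 : deriv (deriv fL) η1 - deriv (deriv fL) η2 ≤ ML * (r1 - l3) :=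
      le_trans (le_abs_self _) (le_trans hb (mul_le_mul_of_nonneg_left habs hML0))
    linarith [mul_le_mul_of_nonneg_left hhL hML0, mul_lt_mul_of_pos_right hαL hh0]
  have hqLr1 : qL fL l1 l2 l3 α h r1 < fL r1 := by
    have hne := newton_id fL l1 l2 r1 (ne_of_gt h2) (ne_of_lt hlr) (ne_of_lt (h2.trans hlr))
    have hpos : 0 < (r1 - l1) * (r1 - l2) := by nlinarith
    have heq : qL fL l1 l2 l3 α h r1 =
        fL r1 + (dd3 fL l1 l2 l3 - dd3 fL l1 l2 r1 - α * h) * ((r1 - l1) * (r1 - l2)) := by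
      simp only [qL]
      rw [hne]
      ring
    rw [heq]
    linarith [mul_neg_of_neg_of_pos (show dd3 fL l1 l2 l3 - dd3 fL l1 l2 r1 - α * h < 0 by
      linarith) hpos]
  -- endpoint values
  have hqLl1 : qL fL l1 l2 l3 α h l1 = fL l1 := by simp [qL]
  have hqRr1 : qR fR r1 r2 r3 α h r1 = fR r1 := by simp [qR]
  set F : ℝ → ℝ := fun x => qL fL l1 l2 l3 α h x - qR fR r1 r2 r3 α h x with hF
  have hFl1 : 0 < F l1 := by
    simp only [hF, hqLl1]
    linarith
  have hFr1 : F r1 < 0 := by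
    simp only [hF, hqRr1]
    linarith
  have hFcont : ContinuousOn F (Set.Icc l1 r1) := by
    apply Continuous.continuousOn
    simp only [hF, qL, qR]
    continuity
  have hmem : (0 : ℝ) ∈ Set.Ioo (F r1) (F l1) := ⟨hFr1, hFl1⟩
  obtain ⟨x, hx, hFx⟩ := intermediate_value_Ioo' (le_of_lt hlr) hFcont hmem
  exact ⟨x, hx, by simpa [hF, sub_eq_zero] using hFx⟩
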